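/- The frequency amplitude features of ESTAG are E(3)-invariant: let T, N be positive integers, x : Fin T → Fin N → ℝ³ be node positions, w : Fin N → Fin T → ℝ be fixed per-node spectral weights, and define f_i(k) = Σ_{t=0}^{T-1} exp(-i' · 2πkt/T) • (x_i(t) - x̄(t)) ∈ ℂ³ and c_i(k) = w_i(k) · ‖f_i(k)‖². Then for every real orthogonal 3×3 matrix O and every b ∈ ℝ³, the quantity c_i(k) computed from the transformed positions t ↦ (i ↦ O · x_i(t) + b) equals c_i(k) computed from x, for all i and k. -/

import Mathlib

open scoped BigOperators

/-- Componentwise coercion of a real 3-vector into a complex 3-vector. -/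
noncomputable def complexify (v : EuclideanSpace ℝ (Fin 3)) : EuclideanSpace ℂ (Fin 3) :=
  WithLp.toLp 2 (fun a => (v a : ℂ))

/-- Mean position of the `N` nodes at frame `t`. -/
noncomputable def meanPos {T N : ℕ} (x : Fin T → Fin N → EuclideanSpace ℝ (Fin 3))
    (t : Fin T) : EuclideanSpace ℝ (Fin 3) :=
  (N : ℝ)⁻¹ • ∑ j : Fin N, x t j

/-- Equivariant Discrete Fourier Transform:
`f_i(k) = ∑_{t=0}^{T-1} exp(-i' · 2πkt/T) • (x_i(t) - x̄(t)) ∈ ℂ³`. -/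
noncomputable def edft {T N : ℕ} (x : Fin T → Fin N → EuclideanSpace ℝ (Fin 3))
    (i : Fin N) (k : Fin T) : EuclideanSpace ℂ (Fin 3) :=
  ∑ t : Fin T,
    Complex.exp (-Complex.I * (2 * (Real.pi : ℂ) * (k.val : ℂ) * (t.val : ℂ) / (T : ℂ))) •
      complexify (x t i - meanPos x t)

/-- The E(3) action `x ↦ O·x + b` on 3-vectors. -/
noncomputable def e3Act (O : Matrix (Fin 3) (Fin 3) ℝ) (b : EuclideanSpace ℝ (Fin 3))
    (v : EuclideanSpace ℝ (Fin 3)) : EuclideanSpace ℝ (Fin 3) :=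
  (show EuclideanSpace ℝ (Fin 3) from WithLp.toLp 2 (O.mulVec v)) + b

/-- Frequency cross-correlation `A_{ij}(k) = w_i(k) w_j(k) |⟨f_i(k), f_j(k)⟩|`. -/
noncomputable def crossCorr {T N : ℕ} (w : Fin N → Fin T → ℝ)
    (x : Fin T → Fin N → EuclideanSpace ℝ (Fin 3)) (i j : Fin N) (k : Fin T) : ℝ :=
  w i k * w j k * ‖(inner ℂ (edft x i k) (edft x j k) : ℂ)‖

/-- Frequency amplitude `c_i(k) = w_i(k) ‖f_i(k)‖²`. -/
noncomputable def amplitude {T N : ℕ} (w : Fin N → Fin T → ℝ)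
    (x : Fin T → Fin N → EuclideanSpace ℝ (Fin 3)) (i : Fin N) (k : Fin T) : ℝ :=
  w i k * ‖edft x i k‖ ^ 2

/-!
Translations cancel in `x_i(t) - x̄(t)` and the rotation part commutes with taking the mean, so
the centred positions transform by `O`. Complexification and the (ℂ-linear) Fourier sum then
commute with `O`, so `f_i(k)` is transformed by `O` viewed as a complex matrix, which is unitary
because `O` is orthogonal; hence `‖f_i(k)‖` is unchanged.
-/

open Matrix

section

variable {n : Type*} [Fintype n] [DecidableEq n]

theorem Matrix.norm_toEuclideanCLM_of_mem_unitaryGroup {𝕜 : Type*} [RCLike 𝕜]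
    {U : Matrix n n 𝕜} (hU : U ∈ unitaryGroup n 𝕜) (v : EuclideanSpace 𝕜 n) :
    ‖toEuclideanCLM (𝕜 := 𝕜) U v‖ = ‖v‖ :=
  ContinuousLinearMap.norm_map_of_mem_unitary (Unitary.map_mem _ hU) v

theorem Matrix.map_ofReal_mem_unitaryGroup {O : Matrix n n ℝ} (hO : O ∈ orthogonalGroup n ℝ) :
    O.map Complex.ofReal ∈ unitaryGroup n ℂ := by
  rw [mem_unitaryGroup_iff'] at *
  rw [star_eq_conjTranspose, ← conjTranspose_map _ fun _ => (Complex.conj_ofReal _).symm,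
    ← star_eq_conjTranspose]
  change (star O).map Complex.ofRealHom * O.map Complex.ofRealHom = 1
  rw [← Matrix.map_mul, hO, Matrix.map_one _ (map_zero _) (map_one _)]

end

lemma e3Act_eq_toEuclideanCLM_add (O : Matrix (Fin 3) (Fin 3) ℝ) (b v : EuclideanSpace ℝ (Fin 3)) :
    e3Act O b v = toEuclideanCLM (𝕜 := ℝ) O v + b :=
  rfl

lemma complexify_toEuclideanCLM (O : Matrix (Fin 3) (Fin 3) ℝ) (v : EuclideanSpace ℝ (Fin 3)) :
    complexify (toEuclideanCLM (𝕜 := ℝ) O v)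
      = toEuclideanCLM (𝕜 := ℂ) (O.map Complex.ofReal) (complexify v) := by
  ext a
  simp [complexify, mulVec, dotProduct]

lemma meanPos_e3Act {T N : ℕ} (hN : N ≠ 0) (x : Fin T → Fin N → EuclideanSpace ℝ (Fin 3))
    (O : Matrix (Fin 3) (Fin 3) ℝ) (b : EuclideanSpace ℝ (Fin 3)) (t : Fin T) :
    meanPos (fun t l => e3Act O b (x t l)) t = e3Act O b (meanPos x t) := by
  simp only [meanPos, e3Act_eq_toEuclideanCLM_add, Finset.sum_add_distrib, ← map_sum,
    Finset.sum_const, Finset.card_univ, Fintype.card_fin, smul_add, ← map_smul,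
    ← Nat.cast_smul_eq_nsmul ℝ, smul_smul, inv_mul_cancel₀ (Nat.cast_ne_zero.2 hN : (N : ℝ) ≠ 0),
    one_smul]

lemma e3Act_sub_meanPos {T N : ℕ} (x : Fin T → Fin N → EuclideanSpace ℝ (Fin 3))
    (O : Matrix (Fin 3) (Fin 3) ℝ) (b : EuclideanSpace ℝ (Fin 3)) (t : Fin T) (i : Fin N) :
    e3Act O b (x t i) - meanPos (fun t l => e3Act O b (x t l)) t
      = toEuclideanCLM (𝕜 := ℝ) O (x t i - meanPos x t) := by
  rw [meanPos_e3Act i.pos.ne', e3Act_eq_toEuclideanCLM_add, e3Act_eq_toEuclideanCLM_add,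
    add_sub_add_right_eq_sub, map_sub]

lemma edft_e3Act {T N : ℕ} (x : Fin T → Fin N → EuclideanSpace ℝ (Fin 3))
    (O : Matrix (Fin 3) (Fin 3) ℝ) (b : EuclideanSpace ℝ (Fin 3)) (i : Fin N) (k : Fin T) :
    edft (fun t l => e3Act O b (x t l)) i k
      = toEuclideanCLM (𝕜 := ℂ) (O.map Complex.ofReal) (edft x i k) := by
  simp only [edft, e3Act_sub_meanPos, complexify_toEuclideanCLM, map_sum, map_smul]

theorem amplitude_E3_invariant_general (T N : ℕ)
    (x : Fin T → Fin N → EuclideanSpace ℝ (Fin 3)) (w : Fin N → Fin T → ℝ)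
    (O : Matrix (Fin 3) (Fin 3) ℝ) (hO : O ∈ Matrix.orthogonalGroup (Fin 3) ℝ)
    (b : EuclideanSpace ℝ (Fin 3)) :
    ∀ (i : Fin N) (k : Fin T),
      amplitude w (fun t l => e3Act O b (x t l)) i k = amplitude w x i k := by
  intro i k
  rw [amplitude, amplitude, edft_e3Act,
    norm_toEuclideanCLM_of_mem_unitaryGroup (map_ofReal_mem_unitaryGroup hO)]

/-- The frequency amplitude features of ESTAG are E(3)-invariant:
computing `c_i(k)` from the transformed positions `t ↦ (i ↦ O·x_i(t) + b)` gives the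
same value as computing it from `x`, for all `i` and `k`. -/
theorem amplitude_E3_invariant (T N : ℕ) (hT : 0 < T) (hN : 0 < N)
    (x : Fin T → Fin N → EuclideanSpace ℝ (Fin 3)) (w : Fin N → Fin T → ℝ)
    (O : Matrix (Fin 3) (Fin 3) ℝ) (hO : O ∈ Matrix.orthogonalGroup (Fin 3) ℝ)
    (b : EuclideanSpace ℝ (Fin 3)) :
    ∀ (i : Fin N) (k : Fin T),
      amplitude w (fun t l => e3Act O b (x t l)) i k = amplitude w x i k :=
  amplitude_E3_invariant_general T N x w O hO b
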